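/- arXiv:2502.15374 — 2 statements merged into one kernel-verified Lean document; each statement's English description precedes it below -/
import Mathlib

section
/- Let g : ℝᵖ → ℝ be square-integrable with E[g(X)] = 0 and suppose g(X) is orthogonal (in L²) to every square-integrable σ(f₀(X))-measurable function, where Y ⫫ X | f₀(X). Then E(g(X) | Y) = 0 almost surely. -/
open MeasureTheory ProbabilityTheory

/-! Orthogonality of `g(X)` to the indicators of `σ(f₀(X))`-measurable sets says exactly that
`E[g(X) | f₀(X)] = 0`. Conditional independence of `σ(Y)` and `σ(X)` given `m = σ(f₀(X))` says
that, on `σ(X)`, the measure `P` restricted to a `σ(Y)`-set `A` has density `P(A | m)`. Hence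
`E[1_A g(X)] = E[P(A | m) g(X)] = E[P(A | m) E[g(X) | m]] = 0` for every such `A`. -/

namespace ProbabilityTheory

variable {Ω : Type*} {m m₁ m₂ mΩ : MeasurableSpace Ω} {μ : Measure Ω}

lemma integral_mul_condExp_of_bound [IsFiniteMeasure μ] (hm : m ≤ mΩ) {c f : Ω → ℝ}
    (hc : StronglyMeasurable[m] c) (C : ℝ) (hcC : ∀ᵐ ω ∂μ, ‖c ω‖ ≤ C) (hf : Integrable f μ) :
    ∫ ω, c ω * f ω ∂μ = ∫ ω, c ω * μ[f | m] ω ∂μ := by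
  rw [← integral_condExp hm]
  exact integral_congr_ae (condExp_stronglyMeasurable_mul_of_bound hm hc hf C hcC)

lemma ae_abs_condExp_indicator_le_one (s : Set Ω) : ∀ᵐ ω ∂μ, |(μ⟦s | m⟧) ω| ≤ 1 :=
  ae_bdd_abs_condExp_of_ae_bdd_abs <| .of_forall fun ω => by
    by_cases h : ω ∈ s <;> simp [h]

lemma condExp_indicator_nonneg (s : Set Ω) : 0 ≤ᵐ[μ] μ⟦s | m⟧ :=
  condExp_nonneg <| .of_forall <| Set.indicator_nonneg fun _ _ => zero_le_one

lemma condExp_ae_eq_zero_of_forall_setIntegral_eq_zero (hm : m ≤ mΩ) [SigmaFinite (μ.trim hm)]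
    {f : Ω → ℝ} (hf : Integrable f μ) (h : ∀ s, MeasurableSet[m] s → ∫ ω in s, f ω ∂μ = 0) :
    μ[f | m] =ᵐ[μ] 0 :=
  (ae_eq_condExp_of_forall_setIntegral_eq hm hf (fun _ _ _ => integrableOn_zero)
    (fun s hs _ => by simp [h s hs]) aestronglyMeasurable_zero).symm

variable [IsFiniteMeasure μ] [StandardBorelSpace Ω] {hm : m ≤ mΩ}

lemma CondIndep.setIntegral_condExp_indicator (hind : CondIndep m m₁ m₂ hm μ)
    (hm₁ : m₁ ≤ mΩ) (hm₂ : m₂ ≤ mΩ) {s t : Set Ω} (hs : MeasurableSet[m₁] s)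
    (ht : MeasurableSet[m₂] t) :
    ∫ ω in t, (μ⟦s | m⟧) ω ∂μ = μ.real (s ∩ t) := by
  have hprod := (condIndep_iff m m₁ m₂ hm hm₁ hm₂ μ).1 hind s t hs ht
  calc ∫ ω in t, (μ⟦s | m⟧) ω ∂μ
      = ∫ ω, (μ⟦s | m⟧) ω * t.indicator (fun _ => (1 : ℝ)) ω ∂μ := by
        rw [← integral_indicator (hm₂ t ht)]
        congr 1 with ω
        by_cases h : ω ∈ t <;> simp [h]
    _ = ∫ ω, (μ⟦s | m⟧) ω * (μ⟦t | m⟧) ω ∂μ :=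
        integral_mul_condExp_of_bound hm stronglyMeasurable_condExp 1
          (by simpa using ae_abs_condExp_indicator_le_one s)
          ((integrable_const 1).indicator (hm₂ t ht))
    _ = ∫ ω, (μ⟦s ∩ t | m⟧) ω ∂μ := (integral_congr_ae hprod).symm
    _ = μ.real (s ∩ t) := by
        rw [integral_condExp hm]
        exact integral_indicator_one ((hm₁ s hs).inter (hm₂ t ht))

lemma CondIndep.restrict_trim_eq_withDensity_trim (hind : CondIndep m m₁ m₂ hm μ)
    (hm₁ : m₁ ≤ mΩ) (hm₂ : m₂ ≤ mΩ) {s : Set Ω} (hs : MeasurableSet[m₁] s) :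
    (μ.restrict s).trim hm₂ = (μ.withDensity fun ω => ENNReal.ofReal ((μ⟦s | m⟧) ω)).trim hm₂ := by
  refine @Measure.ext _ m₂ _ _ fun t ht => ?_
  rw [trim_measurableSet_eq hm₂ ht, trim_measurableSet_eq hm₂ ht,
    Measure.restrict_apply (hm₂ t ht), withDensity_apply _ (hm₂ t ht),
    ← ofReal_integral_eq_lintegral_ofReal
      integrable_condExp.integrableOn (ae_restrict_of_ae (condExp_indicator_nonneg s)),
    hind.setIntegral_condExp_indicator hm₁ hm₂ hs ht, Set.inter_comm, ofReal_measureReal]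

lemma CondIndep.setIntegral_eq_integral_condExp_indicator_mul (hind : CondIndep m m₁ m₂ hm μ)
    (hm₁ : m₁ ≤ mΩ) (hm₂ : m₂ ≤ mΩ) {s : Set Ω} (hs : MeasurableSet[m₁] s) {f : Ω → ℝ}
    (hf : StronglyMeasurable[m₂] f) :
    ∫ ω in s, f ω ∂μ = ∫ ω, (μ⟦s | m⟧) ω * f ω ∂μ := by
  calc ∫ ω in s, f ω ∂μ
      = ∫ ω, f ω ∂(μ.withDensity fun ω => ENNReal.ofReal ((μ⟦s | m⟧) ω)) := by
        rw [integral_trim hm₂ hf, hind.restrict_trim_eq_withDensity_trim hm₁ hm₂ hs,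
          ← integral_trim hm₂ hf]
    _ = ∫ ω, (ENNReal.ofReal ((μ⟦s | m⟧) ω)).toReal • f ω ∂μ :=
        integral_withDensity_eq_integral_toReal_smul
          (stronglyMeasurable_condExp.measurable.mono hm le_rfl).ennreal_ofReal
          (.of_forall fun _ => ENNReal.ofReal_lt_top) f
    _ = ∫ ω, (μ⟦s | m⟧) ω * f ω ∂μ := by
        refine integral_congr_ae ?_
        filter_upwards [condExp_indicator_nonneg s] with ω hω
        rw [ENNReal.toReal_ofReal hω, smul_eq_mul]

lemma CondIndep.condExp_ae_eq_zero (hind : CondIndep m m₁ m₂ hm μ) (hm₁ : m₁ ≤ mΩ)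
    (hm₂ : m₂ ≤ mΩ) {f : Ω → ℝ} (hf : StronglyMeasurable[m₂] f) (hfi : Integrable f μ)
    (hf0 : μ[f | m] =ᵐ[μ] 0) : μ[f | m₁] =ᵐ[μ] 0 := by
  refine condExp_ae_eq_zero_of_forall_setIntegral_eq_zero hm₁ hfi fun s hs => ?_
  rw [hind.setIntegral_eq_integral_condExp_indicator_mul hm₁ hm₂ hs hf,
    integral_mul_condExp_of_bound hm stronglyMeasurable_condExp 1
      (by simpa using ae_abs_condExp_indicator_le_one s) hfi]
  refine integral_eq_zero_of_ae ?_
  filter_upwards [hf0] with ω hω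
  simp [hω]

end ProbabilityTheory

lemma setIntegral_eq_zero_of_forall_integral_mul_comp_eq_zero {Ω β : Type*}
    {mΩ : MeasurableSpace Ω} [MeasurableSpace β] {μ : Measure Ω} [IsFiniteMeasure μ] {Z : Ω → β}
    (hZ : Measurable Z) {f : Ω → ℝ}
    (horth : ∀ h : β → ℝ, Measurable h → MemLp (fun ω => h (Z ω)) 2 μ → ∫ ω, f ω * h (Z ω) ∂μ = 0)
    {s : Set Ω} (hs : MeasurableSet[MeasurableSpace.comap Z inferInstance] s) :
    ∫ ω in s, f ω ∂μ = 0 := by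
  obtain ⟨C, hC, rfl⟩ := hs
  have hind : (Z ⁻¹' C).indicator f = fun ω => f ω * C.indicator 1 (Z ω) := by
    ext ω
    by_cases h : Z ω ∈ C <;> simp [h]
  rw [← integral_indicator (hZ hC), hind]
  refine horth _ (measurable_one.indicator hC) (MemLp.of_bound
    ((measurable_one.indicator hC).comp hZ).aestronglyMeasurable 1 (.of_forall fun ω => ?_))
  by_cases h : Z ω ∈ C <;> simp [h]

theorem stmt_7_general {Ω ΩY : Type*} [MeasurableSpace Ω] [StandardBorelSpace Ω]
    {p d : ℕ} [mY : MeasurableSpace ΩY]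
    (P : Measure Ω) [IsProbabilityMeasure P]
    (X : Ω → (Fin p → ℝ)) (Y : Ω → ΩY) (f₀ : (Fin p → ℝ) → (Fin d → ℝ))
    (hX : Measurable X) (hY : Measurable Y)
    (hle : MeasurableSpace.comap (fun ω => f₀ (X ω)) inferInstance ≤ ‹MeasurableSpace Ω›)
    (hCI : CondIndepFun (MeasurableSpace.comap (fun ω => f₀ (X ω)) inferInstance) hle Y X P)
    (g : (Fin p → ℝ) → ℝ) (hg : Measurable g)
    (hgL2 : MemLp (fun ω => g (X ω)) 2 P)
    (horth : ∀ h : (Fin d → ℝ) → ℝ, Measurable h →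
      MemLp (fun ω => h (f₀ (X ω))) 2 P →
      ∫ ω, g (X ω) * h (f₀ (X ω)) ∂P = 0) :
    P[fun ω => g (X ω) | MeasurableSpace.comap Y mY] =ᵐ[P] fun _ => (0 : ℝ) := by
  have hgX : Integrable (fun ω => g (X ω)) P := hgL2.integrable one_le_two
  have hproj : P[fun ω => g (X ω) | MeasurableSpace.comap (fun ω => f₀ (X ω)) inferInstance]
      =ᵐ[P] 0 :=
    condExp_ae_eq_zero_of_forall_setIntegral_eq_zero hle hgX fun _ =>
      setIntegral_eq_zero_of_forall_integral_mul_comp_eq_zero (measurable_iff_comap_le.2 hle) horth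
  exact ((condIndepFun_iff_condIndep _ _ _ _ _).1 hCI).condExp_ae_eq_zero hY.comap_le hX.comap_le
    (hg.comp (comap_measurable X)).stronglyMeasurable hgX hproj

/-- If `Y ⫫ X ∣ σ(f₀(X))`, `g : ℝᵖ → ℝ` is square-integrable with `E[g(X)] = 0`, and
`g(X)` is orthogonal in `L²` to every square-integrable `σ(f₀(X))`-measurable function
(equivalently, to `h(f₀(X))` for every measurable square-integrable `h`), then
`E(g(X) ∣ Y) = 0` almost surely. -/
theorem stmt_7 {Ω ΩY : Type*} [MeasurableSpace Ω] [StandardBorelSpace Ω] [Nonempty Ω]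
    {p d : ℕ} [mY : MeasurableSpace ΩY]
    (P : Measure Ω) [IsProbabilityMeasure P]
    (X : Ω → (Fin p → ℝ)) (Y : Ω → ΩY) (f₀ : (Fin p → ℝ) → (Fin d → ℝ))
    (hX : Measurable X) (hY : Measurable Y) (hf₀ : Measurable f₀)
    (hle : MeasurableSpace.comap (fun ω => f₀ (X ω)) inferInstance ≤ ‹MeasurableSpace Ω›)
    (hCI : CondIndepFun (MeasurableSpace.comap (fun ω => f₀ (X ω)) inferInstance) hle Y X P)
    (g : (Fin p → ℝ) → ℝ) (hg : Measurable g)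
    (hgL2 : MemLp (fun ω => g (X ω)) 2 P)
    (hgmean : ∫ ω, g (X ω) ∂P = 0)
    (horth : ∀ h : (Fin d → ℝ) → ℝ, Measurable h →
      MemLp (fun ω => h (f₀ (X ω))) 2 P →
      ∫ ω, g (X ω) * h (f₀ (X ω)) ∂P = 0) :
    P[fun ω => g (X ω) | MeasurableSpace.comap Y mY] =ᵐ[P] fun _ => (0 : ℝ) :=
  stmt_7_general (mY := mY) P X Y f₀ hX hY hle hCI g hg hgL2 horth
end

section
/- For symmetric positive definite matrices Y₁, Y₂ with Cholesky factors P₁, P₂ (lower triangular with positive diagonal), the Log-Cholesky distance d_L(Y₁, Y₂) = { ‖⌊P₁⌋ − ⌊P₂⌋‖_F² + ‖log 𝔻(P₁) − log 𝔻(P₂)‖_F² }^{1/2} is a metric on the space of m×m symmetric positive definite matrices: it is nonnegative, symmetric, vanishes iff Y₁ = Y₂, and satisfies the triangle inequality. -/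
open Matrix Finset

/-- The Log-Cholesky distance built from a Cholesky factorization map `chol`:
`d_L(Y₁,Y₂) = { ‖⌊P₁⌋ − ⌊P₂⌋‖_F² + ‖log 𝔻(P₁) − log 𝔻(P₂)‖_F² }^{1/2}`, where
`Pₐ = chol Yₐ`, `⌊P⌋` is the strictly lower-triangular part and `𝔻(P)` the diagonal. -/
noncomputable def logCholeskyDist {m : ℕ}
    (chol : Matrix (Fin m) (Fin m) ℝ → Matrix (Fin m) (Fin m) ℝ)
    (Y₁ Y₂ : Matrix (Fin m) (Fin m) ℝ) : ℝ :=
  Real.sqrt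
    ((∑ i : Fin m, ∑ j : Fin m,
        (if j < i then (chol Y₁ i j - chol Y₂ i j) ^ 2 else 0))
      + ∑ i : Fin m, (Real.log (chol Y₁ i i) - Real.log (chol Y₂ i i)) ^ 2)

/-!
The map `Y ↦ (⌊P⌋, log 𝔻(P))`, with `P` the Cholesky factor of `Y`, sends `S_m⁺` into a Euclidean
space, and `d_L` is the pullback of the Euclidean distance along it. Pullbacks of a metric are
pseudometrics, and this one separates points: `⌊P⌋` and `log 𝔻(P)` recover the lower-triangular
`P` because `log` is injective on the positive reals, and `P` recovers `Y = P Pᵀ`.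
-/

section Coords

variable {n : Type*} [LinearOrder n]

noncomputable def logCholeskyCoords (P : Matrix n n ℝ) : EuclideanSpace ℝ ((n × n) ⊕ n) :=
  WithLp.toLp 2 <| Sum.elim (fun p => if p.2 < p.1 then P p.1 p.2 else 0) fun i => Real.log (P i i)

theorem eq_of_logCholeskyCoords_eq {P Q : Matrix n n ℝ}
    (hP : ∀ i j, i < j → P i j = 0) (hQ : ∀ i j, i < j → Q i j = 0)
    (hPd : ∀ i, 0 < P i i) (hQd : ∀ i, 0 < Q i i)
    (h : logCholeskyCoords P = logCholeskyCoords Q) : P = Q := by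
  ext i j
  rcases lt_trichotomy i j with hij | rfl | hij
  · rw [hP i j hij, hQ i j hij]
  · have hlog := congrArg (· (Sum.inr i)) h
    simp only [logCholeskyCoords, PiLp.toLp_apply, Sum.elim_inr] at hlog
    exact Real.log_injOn_pos (hPd i) (hQd i) hlog
  · simpa [logCholeskyCoords, hij] using congrArg (· (Sum.inl (i, j))) h

end Coords

theorem logCholeskyDist_eq_dist {m : ℕ}
    (chol : Matrix (Fin m) (Fin m) ℝ → Matrix (Fin m) (Fin m) ℝ) (Y₁ Y₂ : Matrix (Fin m) (Fin m) ℝ) :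
    logCholeskyDist chol Y₁ Y₂ =
      dist (logCholeskyCoords (chol Y₁)) (logCholeskyCoords (chol Y₂)) := by
  rw [EuclideanSpace.dist_eq, logCholeskyDist, Fintype.sum_sum_type, Fintype.sum_prod_type]
  congr 3 with i
  · refine Finset.sum_congr rfl fun j _ => ?_
    split_ifs with hji <;> simp [logCholeskyCoords, hji, Real.dist_eq, sq_abs]
  · simp [logCholeskyCoords, Real.dist_eq, sq_abs]

/-- Given a Cholesky factorization map `chol` assigning to each symmetric positive-definite
matrix its lower-triangular factor with positive diagonal, the Log-Cholesky distance is a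
metric on `S_m⁺`: nonnegative, symmetric, vanishing iff the matrices are equal, and
satisfying the triangle inequality. -/
theorem stmt_16 {m : ℕ}
    (chol : Matrix (Fin m) (Fin m) ℝ → Matrix (Fin m) (Fin m) ℝ)
    (hlow : ∀ Y : Matrix (Fin m) (Fin m) ℝ, Y.PosDef → Y.IsSymm →
      ∀ i j : Fin m, i < j → chol Y i j = 0)
    (hdiag : ∀ Y : Matrix (Fin m) (Fin m) ℝ, Y.PosDef → Y.IsSymm →
      ∀ i : Fin m, 0 < chol Y i i)
    (hfac : ∀ Y : Matrix (Fin m) (Fin m) ℝ, Y.PosDef → Y.IsSymm →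
      chol Y * (chol Y)ᵀ = Y) :
    ∀ Y₁ Y₂ Y₃ : Matrix (Fin m) (Fin m) ℝ,
      Y₁.PosDef → Y₁.IsSymm → Y₂.PosDef → Y₂.IsSymm → Y₃.PosDef → Y₃.IsSymm →
      0 ≤ logCholeskyDist chol Y₁ Y₂ ∧
      logCholeskyDist chol Y₁ Y₂ = logCholeskyDist chol Y₂ Y₁ ∧
      (logCholeskyDist chol Y₁ Y₂ = 0 ↔ Y₁ = Y₂) ∧
      logCholeskyDist chol Y₁ Y₃ ≤ logCholeskyDist chol Y₁ Y₂ + logCholeskyDist chol Y₂ Y₃ := by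
  intro Y₁ Y₂ Y₃ h1p h1s h2p h2s _ _
  simp only [logCholeskyDist_eq_dist]
  refine ⟨dist_nonneg, dist_comm _ _, ⟨fun h => ?_, fun h => h ▸ dist_self _⟩, dist_triangle _ _ _⟩
  have hchol : chol Y₁ = chol Y₂ :=
    eq_of_logCholeskyCoords_eq (hlow Y₁ h1p h1s) (hlow Y₂ h2p h2s) (hdiag Y₁ h1p h1s)
      (hdiag Y₂ h2p h2s) (dist_eq_zero.1 h)
  rw [← hfac Y₁ h1p h1s, ← hfac Y₂ h2p h2s, hchol]
end
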